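/- arXiv:1612.03501 — 4 statements merged into one kernel-verified Lean document; each statement's English description precedes it below -/
import Mathlib

section
/- In any group G, for all l, m, n, x, setting p = x⁻¹ m l⁻¹ x l, r = x⁻¹ l n⁻¹ x n, q = x⁻¹ m n⁻¹ x n, and φ(g,h) = [h x⁻¹, g x⁻¹], the following identity holds: φ(l,m) · l φ(n,p) l⁻¹ · φ(n,l) = m φ(n,l) m⁻¹ · φ(n,m) · n φ(r,q) n⁻¹. -/
open scoped commutatorElement

/-- The Reidemeister 3 identity for the Eisermann pair `φ(g,h) = [h x⁻¹, g x⁻¹]`. -/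
theorem eisermann_R3_identity {G : Type*} [Group G] (l m n x : G) :
    let φ : G → G → G := fun g h => ⁅h * x⁻¹, g * x⁻¹⁆
    let p := x⁻¹ * m * l⁻¹ * x * l
    let r := x⁻¹ * l * n⁻¹ * x * n
    let q := x⁻¹ * m * n⁻¹ * x * n
    φ l m * (l * φ n p * l⁻¹) * φ n l =
      (m * φ n l * m⁻¹) * φ n m * (n * φ r q * n⁻¹) := by
  intro φ p r q
  simp only [φ, p, r, q, commutatorElement_def]
  group
end

section
/- In any group G with fixed x ∈ G, the pair ψˣ(g,h) = [g,h][h g⁻¹, x] satisfies the Reidemeister 1 condition ψˣ(g,g) = 1 and, together with φˣ(g,h) = [h x⁻¹, g x⁻¹], the Reidemeister 2 condition φˣ(g,h) · ψˣ(g, z) = 1 where z = g⁻¹ ∂φˣ(g,h)⁻¹ h g — here ∂ is the identity, so z = g⁻¹ [h x⁻¹, g x⁻¹]⁻¹ h g. -/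
open scoped commutatorElement

/-- The Eisermann pair `ψˣ(g,h) = [g,h][h g⁻¹, x]`, `φˣ(g,h) = [h x⁻¹, g x⁻¹]`
satisfies the Reidemeister 1 and Reidemeister 2 conditions. -/
theorem eisermann_pair_R1_R2 {G : Type*} [Group G] (x : G) :
    let φ : G → G → G := fun g h => ⁅h * x⁻¹, g * x⁻¹⁆
    let ψ : G → G → G := fun g h => ⁅g, h⁆ * ⁅h * g⁻¹, x⁆
    (∀ g : G, ψ g g = 1) ∧
    (∀ g h : G, φ g h * ψ g (g⁻¹ * (φ g h)⁻¹ * h * g) = 1) := by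
  refine ⟨fun g => ?_, fun g h => ?_⟩ <;>
  simp only [commutatorElement_def] <;> group
end

section
/- Let ∂ : E → G be a surjective group homomorphism with central kernel, x ∈ G, and define φˣ(g,h) = {h x⁻¹, g x⁻¹}, ψˣ(g,h) = {g,h}{h g⁻¹, x}, where {g,h} = [s(g),s(h)] for a section s. Then ψˣ(g,g) = 1 for all g (Reidemeister 1 condition), and the Reidemeister 2 condition φˣ(g,h)·ψˣ(g, z) = 1 holds, where z = g⁻¹ ∂(φˣ(g,h))⁻¹ h g. -/
open scoped commutatorElement

/-- The unframed Eisermann lifting derived from a central extension: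
`φˣ(g,h) = {h x⁻¹, g x⁻¹}` and `ψˣ(g,h) = {g,h}{h g⁻¹, x}` satisfy the
Reidemeister 1 and Reidemeister 2 conditions. -/
theorem eisermann_lifting_R1_R2 {E G : Type*} [Group E] [Group G]
    (d : E →* G) (hsurj : Function.Surjective d)
    (hcentral : ∀ e : E, d e = 1 → ∀ f : E, e * f = f * e)
    (s : G → E) (hs : ∀ g : G, d (s g) = g) (x : G) :
    let br : G → G → E := fun g h => ⁅s g, s h⁆
    let φ : G → G → E := fun g h => br (h * x⁻¹) (g * x⁻¹)
    let ψ : G → G → E := fun g h => br g h * br (h * g⁻¹) x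
    (∀ g : G, ψ g g = 1) ∧
    (∀ g h : G, φ g h * ψ g (g⁻¹ * (d (φ g h))⁻¹ * h * g) = 1) := by
  intro br φ ψ
  -- the bracket is independent of the lift, in the left slot
  have key : ∀ e e' f : E, d e = d e' → ⁅e, f⁆ = ⁅e', f⁆ := by
    intro e e' f hde
    have hz : d (e * e'⁻¹) = 1 := by
      rw [map_mul, map_inv, hde, mul_inv_cancel]
    have h2 : (e * e'⁻¹) * (e' * f * e'⁻¹) = (e' * f * e'⁻¹) * (e * e'⁻¹) :=
      hcentral _ hz _
    have h3 : (e * e'⁻¹) * (e' * f * e'⁻¹) * (e * e'⁻¹)⁻¹ = e' * f * e'⁻¹ := by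
      rw [h2]; group
    have h1 : e = (e * e'⁻¹) * e' := by group
    rw [commutatorElement_def, commutatorElement_def, h1]
    calc (e * e'⁻¹) * e' * f * ((e * e'⁻¹) * e')⁻¹ * f⁻¹
        = ((e * e'⁻¹) * (e' * f * e'⁻¹) * (e * e'⁻¹)⁻¹) * f⁻¹ := by group
      _ = (e' * f * e'⁻¹) * f⁻¹ := by rw [h3]
      _ = e' * f * e'⁻¹ * f⁻¹ := by group
  -- and in the right slot
  have key' : ∀ e f f' : E, d f = d f' → ⁅e, f⁆ = ⁅e, f'⁆ := by
    intro e f f' hdf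
    have := key f f' e hdf
    calc ⁅e, f⁆ = ⁅f, e⁆⁻¹ := by rw [commutatorElement_inv]
      _ = ⁅f', e⁆⁻¹ := by rw [this]
      _ = ⁅e, f'⁆ := by rw [commutatorElement_inv]
  constructor
  · intro g
    show ⁅s g, s g⁆ * ⁅s (g * g⁻¹), s x⁆ = 1
    have h1 : ⁅s (g * g⁻¹), s x⁆ = ⁅(1 : E), s x⁆ := by
      apply key
      rw [hs, map_one, mul_inv_cancel]
    rw [commutatorElement_self, h1, commutatorElement_def]
    group
  · intro g h
    set a := s (g * x⁻¹) with ha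
    set b := s (h * x⁻¹) with hb
    set X := s x with hX
    set c : E := ⁅b, a⁆ with hc
    show c * (⁅s g, s (g⁻¹ * (d c)⁻¹ * h * g)⁆ *
      ⁅s (g⁻¹ * (d c)⁻¹ * h * g * g⁻¹), s x⁆) = 1
    set u : E := (a * X)⁻¹ * c⁻¹ * (b * X) with hu
    set w : E := u * (a * X) with hw
    have hda : d a = g * x⁻¹ := hs _
    have hdb : d b = h * x⁻¹ := hs _
    have hdX : d X = x := hs _
    have hdaX : d (a * X) = g := by rw [map_mul, hda, hdX]; group
    have hdu : d u = g⁻¹ * (d c)⁻¹ * h * g * g⁻¹ := by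
      rw [hu, map_mul, map_mul, map_inv, map_inv, hdaX, map_mul, hdb, hdX]
      group
    have hdw : d w = g⁻¹ * (d c)⁻¹ * h * g := by
      rw [hw, map_mul, hdu, hdaX]; group
    have e1 : ⁅s g, s (g⁻¹ * (d c)⁻¹ * h * g)⁆ = ⁅a * X, w⁆ := by
      rw [key _ (a * X) _ (by rw [hs, hdaX]),
          key' _ _ w (by rw [hs, hdw])]
    have e2 : ⁅s (g⁻¹ * (d c)⁻¹ * h * g * g⁻¹), s x⁆ = ⁅u, X⁆ := by
      rw [key _ u _ (by rw [hs, hdu]), hX]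
    rw [e1, e2, hw, hu, hc]
    simp only [commutatorElement_def]
    group
end

section
/- Let G be a group whose underlying set carries a rack structure (▷, ◁), and define φ(b,a) = a b (a ◁ b)⁻¹ b⁻¹. Then the Reidemeister 3 identity holds in G: φ(b,a) · b φ(c, a ◁ b) b⁻¹ · φ(c,b) = a φ(c,b) a⁻¹ · φ(c,a) · c φ(b ◁ c, a ◁ c) c⁻¹, for all a, b, c ∈ G. -/
structure RackStr (R : Type*) where
  rop : R → R → R  -- x ▷ y
  lop : R → R → R  -- x ◁ y
  act_inv : ∀ x y, rop x (lop y x) = y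
  inv_act : ∀ x y, lop (rop x y) x = y
  self_distrib : ∀ x y z, rop x (rop y z) = rop (rop x y) (rop x z)
  self_distrib' : ∀ x y z, lop (lop x y) z = lop (lop x z) (lop y z)

/-- For a group `G` carrying an (unrelated) rack structure, the function
`φ(b,a) = a b (a ◁ b)⁻¹ b⁻¹` satisfies the Reidemeister 3 identity. -/
theorem rack_pair_R3 {G : Type*} [Group G] (r : RackStr G) :
    let φ : G → G → G := fun b a => a * b * (r.lop a b)⁻¹ * b⁻¹
    ∀ a b c : G,
      φ b a * (b * φ c (r.lop a b) * b⁻¹) * φ c b =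
        (a * φ c b * a⁻¹) * φ c a * (c * φ (r.lop b c) (r.lop a c) * c⁻¹) := by
  intro φ a b c
  simp only [φ]
  rw [r.self_distrib']
  group
end
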